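/- Let D = H ∪ H̃ be an n-run foldover OofA design on m components with n = 2h, h ≥ 2, and all n runs distinct, where H̃ consists of the reverses of the runs in H. Then the average Kendall tau distance of D satisfies k_ave(D) = n m(m−1) / (4(n−1)). -/

import Mathlib

/-- A run (addition order) on `m` components: position `r` receives component `x r`.
The position map `π_x` is `x.symm`. -/
abbrev Run (m : ℕ) := Equiv.Perm (Fin m)

/-- Kendall tau distance between two runs. -/
def kendall {m : ℕ} (x y : Run m) : ℕ :=
  (Finset.univ.filter fun p : Fin m × Fin m =>
    p.1 < p.2 ∧
      (((x.symm p.1 : ℕ) : ℤ) - ((x.symm p.2 : ℕ) : ℤ)) *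
        (((y.symm p.1 : ℕ) : ℤ) - ((y.symm p.2 : ℕ) : ℤ)) < 0).card

/-- The foldover (reverse) of a run: `x̃ r = x (m+1-r)` (positions reversed). -/
def revRun {m : ℕ} (x : Run m) : Run m := Fin.revPerm.trans x

/-- The `2h`-run foldover design `D = H ∪ H̃` generated by a half-design
`H = (x_1, …, x_h)`: its first `h` rows are the `x_i` and its last `h` rows
are their reverses `x̃_i`. -/
def foldover {m h : ℕ} (H : Fin h → Run m) : Fin (h + h) → Run m :=
  Fin.append H fun i => revRun (H i)

/-- Average pairwise Kendall tau distance of an `n`-run design. -/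
noncomputable def kave {m n : ℕ} (D : Fin n → Run m) : ℝ :=
  (∑ p ∈ Finset.univ.filter (fun p : Fin n × Fin n => p.1 < p.2),
      (kendall (D p.1) (D p.2) : ℝ)) / (n.choose 2 : ℝ)

/-- Second moment of the pairwise Kendall tau distances of an `n`-run design. -/
noncomputable def km2 {m n : ℕ} (D : Fin n → Run m) : ℝ :=
  (∑ p ∈ Finset.univ.filter (fun p : Fin n × Fin n => p.1 < p.2),
      (kendall (D p.1) (D p.2) : ℝ) ^ 2) / (n.choose 2 : ℝ)

/-- Minimum pairwise Kendall tau distance of a design. -/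
noncomputable def kmin {m n : ℕ} (D : Fin n → Run m) : ℕ :=
  sInf {v : ℕ | ∃ i j : Fin n, i < j ∧ kendall (D i) (D j) = v}

lemma sum_pairs {n : ℕ} (f : Fin n → Fin n → ℝ) (hsym : ∀ i j, f i j = f j i)
    (hdiag : ∀ i, f i i = 0) :
    ∑ p ∈ Finset.univ.filter (fun p : Fin n × Fin n => p.1 < p.2), f p.1 p.2
      = (∑ i, ∑ j, f i j) / 2 := by
  have h1 : ∑ i, ∑ j, f i j = ∑ p : Fin n × Fin n, f p.1 p.2 := by
    rw [← Finset.univ_product_univ, Finset.sum_product]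
  have h2 : ∑ p : Fin n × Fin n, f p.1 p.2
      = (∑ p ∈ Finset.univ.filter (fun p : Fin n × Fin n => p.1 < p.2), f p.1 p.2)
        + ∑ p ∈ Finset.univ.filter (fun p : Fin n × Fin n => ¬ p.1 < p.2), f p.1 p.2 :=
    (Finset.sum_filter_add_sum_filter_not _ _ _).symm
  have h3 : ∑ p ∈ Finset.univ.filter (fun p : Fin n × Fin n => ¬ p.1 < p.2), f p.1 p.2
      = (∑ p ∈ (Finset.univ.filter (fun p : Fin n × Fin n => ¬ p.1 < p.2)).filter
            (fun p => p.2 < p.1), f p.1 p.2)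
        + ∑ p ∈ (Finset.univ.filter (fun p : Fin n × Fin n => ¬ p.1 < p.2)).filter
            (fun p => ¬ p.2 < p.1), f p.1 p.2 :=
    (Finset.sum_filter_add_sum_filter_not _ _ _).symm
  have h4 : ∑ p ∈ (Finset.univ.filter (fun p : Fin n × Fin n => ¬ p.1 < p.2)).filter
      (fun p => ¬ p.2 < p.1), f p.1 p.2 = 0 := by
    apply Finset.sum_eq_zero
    intro p hp
    simp only [Finset.mem_filter] at hp
    have : p.1 = p.2 := le_antisymm (not_lt.mp hp.2) (not_lt.mp hp.1.2)
    rw [this]; exact hdiag p.2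
  have h5 : (Finset.univ.filter (fun p : Fin n × Fin n => ¬ p.1 < p.2)).filter
      (fun p => p.2 < p.1) = Finset.univ.filter (fun p : Fin n × Fin n => p.2 < p.1) := by
    rw [Finset.filter_filter]
    apply Finset.filter_congr
    intro p _
    constructor
    · exact fun hp => hp.2
    · exact fun hp => ⟨not_lt.mpr hp.le, hp⟩
  have h6 : ∑ p ∈ Finset.univ.filter (fun p : Fin n × Fin n => p.2 < p.1), f p.1 p.2
      = ∑ p ∈ Finset.univ.filter (fun p : Fin n × Fin n => p.1 < p.2), f p.1 p.2 := by
    apply Finset.sum_nbij' (fun p => Prod.swap p) (fun p => Prod.swap p)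
    · intro p hp
      simp only [Finset.mem_filter, Finset.mem_univ, true_and, Prod.fst_swap,
        Prod.snd_swap] at hp ⊢
      exact hp
    · intro p hp
      simp only [Finset.mem_filter, Finset.mem_univ, true_and, Prod.fst_swap,
        Prod.snd_swap] at hp ⊢
      exact hp
    · intro p _; exact Prod.swap_swap p
    · intro p _; exact Prod.swap_swap p
    · intro p _
      simp only [Prod.fst_swap, Prod.snd_swap]
      exact hsym p.1 p.2
  rw [h1, h2, h3, h4, h5, h6]
  ring

lemma revRun_symm_apply {m : ℕ} (y : Run m) (c : Fin m) :
    (revRun y).symm c = (y.symm c).rev := by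
  simp [revRun, Equiv.symm_trans_apply, Fin.revPerm_symm]

lemma rev_diff {m : ℕ} (a b : Fin m) :
    (((a.rev : ℕ) : ℤ)) - ((b.rev : ℕ) : ℤ) = -((((a : ℕ) : ℤ)) - ((b : ℕ) : ℤ)) := by
  have ha := a.isLt
  have hb := b.isLt
  simp only [Fin.val_rev]
  omega

lemma kendall_symm {m : ℕ} (x y : Run m) : kendall x y = kendall y x := by
  unfold kendall
  congr 1
  apply Finset.filter_congr
  intro p _
  rw [mul_comm]

lemma kendall_self {m : ℕ} (x : Run m) : kendall x x = 0 := by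
  unfold kendall
  rw [Finset.card_eq_zero, Finset.filter_eq_empty_iff]
  rintro p _ ⟨_, h2⟩
  exact absurd h2 (not_lt.mpr (mul_self_nonneg _))

lemma kendall_add_rev {m : ℕ} (x y : Run m) :
    kendall x y + kendall x (revRun y)
      = (Finset.univ.filter (fun p : Fin m × Fin m => p.1 < p.2)).card := by
  unfold kendall
  have hfil : ∀ (z : Run m),
      (Finset.univ.filter fun p : Fin m × Fin m =>
        p.1 < p.2 ∧
          (((x.symm p.1 : ℕ) : ℤ) - ((x.symm p.2 : ℕ) : ℤ)) *
            (((z.symm p.1 : ℕ) : ℤ) - ((z.symm p.2 : ℕ) : ℤ)) < 0)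
      = (Finset.univ.filter (fun p : Fin m × Fin m => p.1 < p.2)).filter
          (fun p => (((x.symm p.1 : ℕ) : ℤ) - ((x.symm p.2 : ℕ) : ℤ)) *
            (((z.symm p.1 : ℕ) : ℤ) - ((z.symm p.2 : ℕ) : ℤ)) < 0) := by
    intro z
    rw [Finset.filter_filter]
  rw [hfil y, hfil (revRun y)]
  have hBB : (Finset.univ.filter (fun p : Fin m × Fin m => p.1 < p.2)).filter
      (fun p => (((x.symm p.1 : ℕ) : ℤ) - ((x.symm p.2 : ℕ) : ℤ)) *
        ((((revRun y).symm p.1 : ℕ) : ℤ) - (((revRun y).symm p.2 : ℕ) : ℤ)) < 0)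
      = (Finset.univ.filter (fun p : Fin m × Fin m => p.1 < p.2)).filter
        (fun p => ¬ ((((x.symm p.1 : ℕ) : ℤ) - ((x.symm p.2 : ℕ) : ℤ)) *
          (((y.symm p.1 : ℕ) : ℤ) - ((y.symm p.2 : ℕ) : ℤ)) < 0)) := by
    apply Finset.filter_congr
    intro p hp
    simp only [Finset.mem_filter] at hp
    have hne : p.1 ≠ p.2 := ne_of_lt hp.2
    have hx : (((x.symm p.1 : ℕ) : ℤ) - ((x.symm p.2 : ℕ) : ℤ)) ≠ 0 := by
      intro hc
      apply hne
      have : (x.symm p.1 : ℕ) = (x.symm p.2 : ℕ) := by omega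
      have := Fin.val_injective this
      simpa using x.symm.injective this
    have hy : (((y.symm p.1 : ℕ) : ℤ) - ((y.symm p.2 : ℕ) : ℤ)) ≠ 0 := by
      intro hc
      apply hne
      have : (y.symm p.1 : ℕ) = (y.symm p.2 : ℕ) := by omega
      have := Fin.val_injective this
      simpa using y.symm.injective this
    rw [revRun_symm_apply, revRun_symm_apply, rev_diff, mul_neg]
    have hprod : (((x.symm p.1 : ℕ) : ℤ) - ((x.symm p.2 : ℕ) : ℤ)) *
        (((y.symm p.1 : ℕ) : ℤ) - ((y.symm p.2 : ℕ) : ℤ)) ≠ 0 := mul_ne_zero hx hy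
    set a := (((x.symm p.1 : ℕ) : ℤ) - ((x.symm p.2 : ℕ) : ℤ)) *
        (((y.symm p.1 : ℕ) : ℤ) - ((y.symm p.2 : ℕ) : ℤ)) with ha
    constructor
    · intro h1 h2; omega
    · intro h1; omega
  rw [hBB]
  exact Finset.card_filter_add_card_filter_not _

lemma card_pairSet {m : ℕ} :
    ((Finset.univ.filter (fun p : Fin m × Fin m => p.1 < p.2)).card : ℝ)
      = (m : ℝ) * ((m : ℝ) - 1) / 2 := by
  have := sum_pairs (n := m) (fun i j => if i = j then 0 else 1)
    (fun i j => by by_cases h : i = j <;> simp [h, eq_comm, Ne.symm]) (fun i => by simp)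
  have hL : ∑ p ∈ Finset.univ.filter (fun p : Fin m × Fin m => p.1 < p.2),
      (if p.1 = p.2 then (0:ℝ) else 1)
      = ((Finset.univ.filter (fun p : Fin m × Fin m => p.1 < p.2)).card : ℝ) := by
    rw [Finset.sum_congr rfl (fun p hp => ?_), Finset.sum_const, nsmul_eq_mul, mul_one]
    simp only [Finset.mem_filter] at hp
    simp [ne_of_lt hp.2]
  have hR : ∑ i : Fin m, ∑ j : Fin m, (if i = j then (0:ℝ) else 1)
      = (m : ℝ) * ((m : ℝ) - 1) := by
    have : ∀ i : Fin m, ∑ j : Fin m, (if i = j then (0:ℝ) else 1) = (m : ℝ) - 1 := by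
      intro i
      have : ∑ j : Fin m, (if i = j then (0:ℝ) else 1)
          = ∑ j : Fin m, ((1:ℝ) - if i = j then 1 else 0) := by
        apply Finset.sum_congr rfl
        intro j _
        by_cases h : i = j <;> simp [h]
      rw [this, Finset.sum_sub_distrib]
      simp
    rw [Finset.sum_congr rfl (fun i _ => this i), Finset.sum_const]
    simp [mul_sub]
  rw [hL, hR] at this
  rw [this]

/-- The average Kendall tau distance of a nonreplicated foldover design with
`n = 2h` runs equals `n m(m−1)/(4(n−1))`. -/
theorem stmt13 {m h : ℕ} (hm : 2 ≤ m) (hh : 2 ≤ h) (H : Fin h → Run m)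
    (hdist : Function.Injective (foldover H)) :
    kave (foldover H) =
      (2 * (h : ℝ)) * (m : ℝ) * ((m : ℝ) - 1) / (4 * (2 * (h : ℝ) - 1)) := by
  unfold kave
  set C : ℝ := ((Finset.univ.filter (fun p : Fin m × Fin m => p.1 < p.2)).card : ℝ) with hC
  have hdsum := sum_pairs (n := h + h)
    (fun i j => (kendall (foldover H i) (foldover H j) : ℝ))
    (fun i j => by rw [kendall_symm])
    (fun i => by rw [kendall_self]; simp)
  rw [hdsum]
  have hinner : ∀ x : Run m, ∑ j : Fin (h + h), (kendall x (foldover H j) : ℝ)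
      = (h : ℝ) * C := by
    intro x
    rw [Fin.sum_univ_add, ← Finset.sum_add_distrib]
    have hstep : ∀ j : Fin h, (kendall x (foldover H (Fin.castAdd h j)) : ℝ)
        + (kendall x (foldover H (Fin.natAdd h j)) : ℝ) = C := by
      intro j
      rw [show foldover H (Fin.castAdd h j) = H j from Fin.append_left _ _ j,
        show foldover H (Fin.natAdd h j) = revRun (H j) from Fin.append_right _ _ j,
        ← Nat.cast_add, kendall_add_rev]
    rw [Finset.sum_congr rfl (fun j _ => hstep j), Finset.sum_const]
    simp [nsmul_eq_mul]
  have houter : ∑ i : Fin (h + h), ∑ j : Fin (h + h),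
      (kendall (foldover H i) (foldover H j) : ℝ) = ((h : ℝ) + h) * ((h : ℝ) * C) := by
    rw [Finset.sum_congr rfl (fun i _ => hinner (foldover H i)), Finset.sum_const]
    simp only [Finset.card_univ, Fintype.card_fin, nsmul_eq_mul]
    push_cast
    ring
  rw [houter, hC, card_pairSet, Nat.cast_choose_two]
  have hr : (2 : ℝ) ≤ (h : ℝ) := by exact_mod_cast hh
  have hne1 : ((h : ℝ) + h) ≠ 0 := by linarith
  have hne2 : ((h : ℝ) + h) - 1 ≠ 0 := by linarith
  have hne3 : 2 * (h : ℝ) - 1 ≠ 0 := by linarith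
  push_cast
  field_simp
  ring
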